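/- Let I ⊆ ℝ be an interval, let F̂ : I → M₃(ℂ) be differentiable and satisfy the local frame equations F̂′ = F̂·C with C = [[(1/3)·i·p, −i·q, m], [0, −(2/3)·i·p, q], [1, 0, (1/3)·i·p]] for real-valued functions m, p, q on I. Let θ : I → ℝ be differentiable with θ′ = −p, let 𝖩 = diag((1/3)·i, −(2/3)·i, (1/3)·i), and define F := F̂·exp(θ·𝖩) and z := exp(i·θ)·q. Then F satisfies the nonlocal frame equations F′ = F·[[0, −i·conj(z), m], [0, 0, z], [1, 0, 0]] (rows listed in order). -/

import Mathlib

open Complex Matrix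

noncomputable section

/-- The diagonal matrix `𝖩 = diag(i/3, −2i/3, i/3)`. -/
def matJ : Matrix (Fin 3) (Fin 3) ℂ :=
  Matrix.diagonal ![(1/3) * Complex.I, -(2/3) * Complex.I, (1/3) * Complex.I]

/-- The coefficient matrix of the local frame equations. -/
def localC (m p q : ℝ) : Matrix (Fin 3) (Fin 3) ℂ :=
  !![(1/3) * Complex.I * (p : ℂ), -Complex.I * (q : ℂ), (m : ℂ);
     0, -(2/3) * Complex.I * (p : ℂ), (q : ℂ);
     1, 0, (1/3) * Complex.I * (p : ℂ)]

/-- The coefficient matrix of the nonlocal (natural) frame equations. -/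
def naturalC (z : ℂ) (m : ℝ) : Matrix (Fin 3) (Fin 3) ℂ :=
  !![0, -Complex.I * (starRingEnd ℂ) z, (m : ℂ);
     0, 0, z;
     1, 0, 0]

/-!
Since `exp(θ𝖩)` is diagonal and `θ′ = −p`, the product rule gives
`F′ = F̂ (C exp(θ𝖩) − p 𝖩 exp(θ𝖩))`. Writing `w = exp(iθ/3)`, we have
`exp(θ𝖩) = diag(w, w⁻², w)` with `w̄ = w⁻¹`; the term `−p𝖩` cancels the diagonal of `C`, and
conjugating by `diag(w, w⁻², w)` multiplies the `(2,3)` entry `q` by `w³ = exp(iθ)` and the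
`(1,2)` entry `−iq` by `w⁻³ = conj(exp(iθ))`, which yields the natural coefficient matrix.
-/

theorem hasDerivAt_matrix_mul_apply {𝕜 𝔸 : Type*} [NontriviallyNormedField 𝕜]
    [NormedCommRing 𝔸] [NormedAlgebra 𝕜 𝔸] {l m n : Type*} [Fintype m]
    {G : 𝕜 → Matrix l m 𝔸} {E : 𝕜 → Matrix m n 𝔸} {G' : Matrix l m 𝔸} {E' : Matrix m n 𝔸}
    {x : 𝕜} (hG : ∀ i k, HasDerivAt (fun y => G y i k) (G' i k) x)
    (hE : ∀ k j, HasDerivAt (fun y => E y k j) (E' k j) x) (i : l) (j : n) :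
    HasDerivAt (fun y => (G y * E y) i j) ((G' * E x + G x * E') i j) x := by
  simp only [Matrix.mul_apply, Matrix.add_apply, ← Finset.sum_add_distrib]
  exact HasDerivAt.fun_sum fun k _ => (hG i k).mul (hE k j)

theorem hasDerivAt_exp_ofReal_smul_apply {n : Type*} [Fintype n] [DecidableEq n]
    (A : Matrix n n ℂ) {θ : ℝ → ℝ} {θ' x : ℝ} (hθ : HasDerivAt θ θ' x) (i j : n) :
    HasDerivAt (fun y => NormedSpace.exp ((θ y : ℂ) • A) i j)
      (((θ' : ℂ) • (A * NormedSpace.exp ((θ x : ℂ) • A))) i j) x := by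
  -- any normed algebra structure on matrices will do; `exp` and the topology do not depend on it
  let _ := Matrix.linftyOpNormedRing (n := n) (α := ℂ)
  let _ := Matrix.linftyOpNormedAlgebra (n := n) (R := ℂ) (α := ℂ)
  have h := (hasDerivAt_exp_smul_const' (𝕂 := ℂ) A (θ x : ℂ)).scomp x hθ.ofReal_comp
  exact (LinearMap.toContinuousLinearMap (entryLinearMap ℝ ℂ i j)).hasFDerivAt.comp_hasDerivAt x h

theorem exp_smul_diagonal {n : Type*} [Fintype n] [DecidableEq n] (t : ℂ) (d : n → ℂ) :
    NormedSpace.exp (t • diagonal d) = diagonal fun k => cexp (t * d k) := by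
  rw [← diagonal_smul, exp_diagonal]
  congr 1
  ext k
  simp [Complex.exp_eq_exp_ℂ]

theorem exp_ofReal_smul_matJ (t : ℝ) :
    NormedSpace.exp ((t : ℂ) • matJ) =
      diagonal ![cexp (t * I / 3), (cexp (t * I / 3) ^ 2)⁻¹, cexp (t * I / 3)] := by
  rw [matJ, exp_smul_diagonal]
  congr 1
  ext k
  fin_cases k
  · simp only [Fin.zero_eta, Matrix.cons_val]; ring_nf
  · simp only [Fin.mk_one, Matrix.cons_val]
    rw [← Complex.exp_nat_mul, ← Complex.exp_neg]; ring_nf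
  · simp only [Fin.reduceFinMk, Matrix.cons_val]; ring_nf

theorem diagonal_mul_naturalC (m p q : ℝ) {w : ℂ} (hw : w ≠ 0)
    (hconj : starRingEnd ℂ w = w⁻¹) :
    diagonal ![w, (w ^ 2)⁻¹, w] * naturalC (w ^ 3 * q) m =
      localC m p q * diagonal ![w, (w ^ 2)⁻¹, w] -
        (p : ℂ) • (matJ * diagonal ![w, (w ^ 2)⁻¹, w]) := by
  ext i j
  rw [matJ, diagonal_mul_diagonal, Matrix.sub_apply, Matrix.smul_apply, diagonal_mul,
    mul_diagonal, diagonal_apply]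
  fin_cases i <;> fin_cases j <;> simp [localC, naturalC, hconj] <;> field_simp <;> ring

theorem exp_ofReal_smul_matJ_mul_naturalC (m p q t : ℝ) :
    NormedSpace.exp ((t : ℂ) • matJ) * naturalC (cexp (I * t) * q) m =
      localC m p q * NormedSpace.exp ((t : ℂ) • matJ) -
        (p : ℂ) • (matJ * NormedSpace.exp ((t : ℂ) • matJ)) := by
  have hcube : cexp (I * t) = cexp (t * I / 3) ^ 3 := by
    rw [← Complex.exp_nat_mul]; ring_nf
  have hconj : starRingEnd ℂ (cexp (t * I / 3)) = (cexp (t * I / 3))⁻¹ := by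
    rw [← Complex.exp_conj, ← Complex.exp_neg]; simp [map_ofNat, neg_div]
  rw [exp_ofReal_smul_matJ, hcube]
  exact diagonal_mul_naturalC m p q (Complex.exp_ne_zero _) hconj

theorem local_to_natural_frame_general (I : Set ℝ)
    (F' : ℝ → Matrix (Fin 3) (Fin 3) ℂ) (m p q θ : ℝ → ℝ)
    (hFdiff : ∀ x ∈ I, ∀ i j, DifferentiableAt ℝ (fun y => F' y i j) x)
    (hθdiff : ∀ x ∈ I, DifferentiableAt ℝ θ x)
    (hF : ∀ x ∈ I, ∀ i j,
      deriv (fun y => F' y i j) x = (F' x * localC (m x) (p x) (q x)) i j)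
    (hθ : ∀ x ∈ I, deriv θ x = -p x)
    (F : ℝ → Matrix (Fin 3) (Fin 3) ℂ)
    (hFdef : F = fun x => F' x * NormedSpace.exp (((θ x : ℂ)) • matJ))
    (z : ℝ → ℂ) (hz : z = fun x => Complex.exp (Complex.I * (θ x : ℂ)) * (q x : ℂ)) :
    ∀ x ∈ I, ∀ i j,
      deriv (fun y => F y i j) x = (F x * naturalC (z x) (m x)) i j := by
  intro x hx i j
  have hθx : HasDerivAt θ (-p x) x := hθ x hx ▸ (hθdiff x hx).hasDerivAt
  have hF'x : ∀ i k, HasDerivAt (fun y => F' y i k) ((F' x * localC (m x) (p x) (q x)) i k) x :=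
    fun i k => hF x hx i k ▸ (hFdiff x hx i k).hasDerivAt
  have hprod := hasDerivAt_matrix_mul_apply hF'x (hasDerivAt_exp_ofReal_smul_apply matJ hθx) i j
  have hgauge : F' x * localC (m x) (p x) (q x) * NormedSpace.exp ((θ x : ℂ) • matJ) +
        F' x * (((-p x : ℝ) : ℂ) • (matJ * NormedSpace.exp ((θ x : ℂ) • matJ))) =
      F' x * NormedSpace.exp ((θ x : ℂ) • matJ) * naturalC (cexp (Complex.I * θ x) * q x) (m x) := by
    rw [Matrix.mul_assoc, Matrix.mul_assoc, exp_ofReal_smul_matJ_mul_naturalC _ (p x),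
      ofReal_neg, neg_smul, Matrix.mul_sub, Matrix.mul_neg, sub_eq_add_neg]
  simp only [hFdef, hz]
  rw [hprod.deriv, hgauge]

/-- Twisting the local frame by `exp(θ𝖩)` with `θ′ = −p` yields a natural frame
satisfying the nonlocal frame equations with complex curvature `z = exp(iθ)·q`. -/
theorem local_to_natural_frame (I : Set ℝ) (hI : I.OrdConnected)
    (F' : ℝ → Matrix (Fin 3) (Fin 3) ℂ) (m p q θ : ℝ → ℝ)
    (hFdiff : ∀ x ∈ I, ∀ i j, DifferentiableAt ℝ (fun y => F' y i j) x)
    (hθdiff : ∀ x ∈ I, DifferentiableAt ℝ θ x)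
    (hF : ∀ x ∈ I, ∀ i j,
      deriv (fun y => F' y i j) x = (F' x * localC (m x) (p x) (q x)) i j)
    (hθ : ∀ x ∈ I, deriv θ x = -p x)
    (F : ℝ → Matrix (Fin 3) (Fin 3) ℂ)
    (hFdef : F = fun x => F' x * NormedSpace.exp (((θ x : ℂ)) • matJ))
    (z : ℝ → ℂ) (hz : z = fun x => Complex.exp (Complex.I * (θ x : ℂ)) * (q x : ℂ)) :
    ∀ x ∈ I, ∀ i j,
      deriv (fun y => F y i j) x = (F x * naturalC (z x) (m x)) i j :=
  local_to_natural_frame_general I F' m p q θ hFdiff hθdiff hF hθ F hFdef z hz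

end
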